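/- If ψ_x(t) and ψ_y(t) are unit-norm solutions of Schrödinger equations whose Hamiltonians satisfy ‖H_x(t) − H_y(t)‖ ≤ c for all t ∈ [0,T] (operator norm), then |⟨ψ_x(T), ψ_y(T)⟩| ≥ |⟨ψ_x(0), ψ_y(0)⟩| − c·T. -/

import Mathlib

/-!
The overlap `f t = ⟪ψx t, ψy t⟫` satisfies `f' = i ⟪Hx ψx, ψy⟫ - i ⟪ψx, Hy ψy⟫`, and since `Hx`
is self-adjoint this is `i ⟪ψx, (Hx - Hy) ψy⟫`. For unit vectors this derivative has norm at
most `‖Hx - Hy‖ ≤ c`, so `f` moves by at most `c T` over `[0, T]`, and so does its modulus.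
-/

open Set

section Schrodinger

variable {E : Type*} [NormedAddCommGroup E] [InnerProductSpace ℂ E]

lemma hasDerivAt_inner_of_schrodinger {ψ φ : ℝ → E} {ψ' φ' : E} {A B : E →L[ℂ] E} {t : ℝ}
    (hψ : HasDerivAt ψ ψ' t) (hφ : HasDerivAt φ φ' t)
    (hSψ : Complex.I • ψ' = A (ψ t)) (hSφ : Complex.I • φ' = B (φ t))
    (hA : (A : E →ₗ[ℂ] E).IsSymmetric) :
    HasDerivAt (fun s => inner ℂ (ψ s) (φ s)) (Complex.I * inner ℂ (ψ t) ((A - B) (φ t))) t := by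
  have eq_neg_I_smul : ∀ {v w : E}, Complex.I • v = w → v = (-Complex.I) • w := by
    rintro v w rfl
    rw [smul_smul, neg_mul, Complex.I_mul_I, neg_neg, one_smul]
  refine (hψ.inner ℂ hφ).congr_deriv ?_
  rw [eq_neg_I_smul hSψ, eq_neg_I_smul hSφ, inner_smul_left, inner_smul_right, sub_apply,
    inner_sub_right, ← ContinuousLinearMap.coe_coe A, ← hA]
  simp only [map_neg, Complex.conj_I, neg_neg, ContinuousLinearMap.coe_coe]
  ring

lemma norm_inner_apply_le_opNorm {A : E →L[ℂ] E} {x y : E} (hx : ‖x‖ = 1) (hy : ‖y‖ = 1) :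
    ‖inner ℂ x (A y)‖ ≤ ‖A‖ :=
  calc ‖inner ℂ x (A y)‖ ≤ ‖x‖ * ‖A y‖ := norm_inner_le_norm _ _
    _ ≤ ‖x‖ * (‖A‖ * ‖y‖) := by gcongr; exact A.le_opNorm y
    _ = ‖A‖ := by rw [hx, hy, one_mul, mul_one]

end Schrodinger

lemma norm_sub_le_norm_of_norm_deriv_le {F : Type*} [NormedAddCommGroup F] [NormedSpace ℝ F]
    {f f' : ℝ → F} {a b C : ℝ} (hab : a ≤ b) (hf : ∀ t, HasDerivAt f (f' t) t)
    (bound : ∀ t ∈ Icc a b, ‖f' t‖ ≤ C) :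
    ‖f a‖ - C * (b - a) ≤ ‖f b‖ := by
  have hmvt := norm_image_sub_le_of_norm_deriv_le_segment' (fun t _ => (hf t).hasDerivWithinAt)
    (fun t ht => bound t (Ico_subset_Icc_self ht)) b (right_mem_Icc.mpr hab)
  linarith [norm_sub_norm_le (f a) (f b), norm_sub_rev (f a) (f b)]

theorem stmt3_general {n : ℕ} (ψx ψy ψx' ψy' : ℝ → EuclideanSpace ℂ (Fin n))
    (Hx Hy : ℝ → Matrix (Fin n) (Fin n) ℂ) (c T : ℝ) (hT : 0 ≤ T)
    (hHx : ∀ t, (Hx t).IsHermitian)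
    (hux : ∀ t, ‖ψx t‖ = 1) (huy : ∀ t, ‖ψy t‖ = 1)
    (hdx : ∀ t, HasDerivAt ψx (ψx' t) t) (hdy : ∀ t, HasDerivAt ψy (ψy' t) t)
    (hSx : ∀ t, Complex.I • ψx' t = Matrix.toEuclideanCLM (𝕜 := ℂ) (Hx t) (ψx t))
    (hSy : ∀ t, Complex.I • ψy' t = Matrix.toEuclideanCLM (𝕜 := ℂ) (Hy t) (ψy t))
    (hc : ∀ t ∈ Set.Icc (0 : ℝ) T,
      ‖Matrix.toEuclideanCLM (𝕜 := ℂ) (Hx t - Hy t)‖ ≤ c) :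
    ‖inner (𝕜 := ℂ) (ψx T) (ψy T)‖ ≥
      ‖inner (𝕜 := ℂ) (ψx 0) (ψy 0)‖ - c * T := by
  have hderiv t := hasDerivAt_inner_of_schrodinger (hdx t) (hdy t) (hSx t) (hSy t)
    (Matrix.isSymmetric_toEuclideanLin_iff.mpr (hHx t))
  have hbound : ∀ t ∈ Icc (0 : ℝ) T, ‖Complex.I * inner ℂ (ψx t)
      ((Matrix.toEuclideanCLM (𝕜 := ℂ) (Hx t) - Matrix.toEuclideanCLM (𝕜 := ℂ) (Hy t)) (ψy t))‖ ≤ c := by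
    intro t ht
    rw [norm_mul, Complex.norm_I, one_mul, ← map_sub]
    exact (norm_inner_apply_le_opNorm (hux t) (huy t)).trans (hc t ht)
  simpa using norm_sub_le_norm_of_norm_deriv_le hT hderiv hbound

/-- if `‖H_x(t) − H_y(t)‖ ≤ c` on `[0,T]` then
`|⟨ψ_x(T), ψ_y(T)⟩| ≥ |⟨ψ_x(0), ψ_y(0)⟩| − c T`. -/
theorem stmt3 {n : ℕ} (ψx ψy ψx' ψy' : ℝ → EuclideanSpace ℂ (Fin n))
    (Hx Hy : ℝ → Matrix (Fin n) (Fin n) ℂ) (c T : ℝ) (hT : 0 ≤ T)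
    (hHxc : Continuous Hx) (hHyc : Continuous Hy)
    (hHx : ∀ t, (Hx t).IsHermitian) (hHy : ∀ t, (Hy t).IsHermitian)
    (hux : ∀ t, ‖ψx t‖ = 1) (huy : ∀ t, ‖ψy t‖ = 1)
    (hdx : ∀ t, HasDerivAt ψx (ψx' t) t) (hdy : ∀ t, HasDerivAt ψy (ψy' t) t)
    (hSx : ∀ t, Complex.I • ψx' t = Matrix.toEuclideanCLM (𝕜 := ℂ) (Hx t) (ψx t))
    (hSy : ∀ t, Complex.I • ψy' t = Matrix.toEuclideanCLM (𝕜 := ℂ) (Hy t) (ψy t))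
    (hc : ∀ t ∈ Set.Icc (0 : ℝ) T,
      ‖Matrix.toEuclideanCLM (𝕜 := ℂ) (Hx t - Hy t)‖ ≤ c) :
    ‖inner (𝕜 := ℂ) (ψx T) (ψy T)‖ ≥
      ‖inner (𝕜 := ℂ) (ψx 0) (ψy 0)‖ - c * T :=
  stmt3_general ψx ψy ψx' ψy' Hx Hy c T hT hHx hux huy hdx hdy hSx hSy hc
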